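/- arXiv:1505.07437 — 6 statements merged into one kernel-verified Lean document; each statement's English description precedes it below -/
import Mathlib

section
/- Let k ≥ 2 be an integer and let T = T_k be the unique formal power series over ℚ with constant coefficient 0 satisfying T = X + T^k/k!. Then for all integers ℓ ≥ 1 and n ≥ 1 such that n − ℓ = s(k−1) for a nonnegative integer s, the coefficient of X^n in T^ℓ equals (ℓ/(s(k−1)+ℓ)) · C(ks+ℓ−1, s) · (1/k!)^s, where C(·,·) denotes a binomial coefficient. -/
/-!
With `c = 1/k!`, multiplying `T = X + c T^k` by `T^m` gives
`[X^(j+1)] T^(m+1) = [X^j] T^m + c [X^(j+1)] T^(m+k)`. Together with `[X^m] T^m = 1` this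
determines the coefficients `[X^(s(k-1)+ℓ)] T^ℓ`, and the Raney numbers satisfy the same
Pascal-type recurrence, so a double induction on `s` and `ℓ` gives the formula.
-/
open PowerSeries

/-- The Raney number `ℓ/(ks+ℓ) · C(ks+ℓ, s)`, in the form of the statement. -/
def raney (k ℓ s : ℕ) : ℚ := (ℓ : ℚ) / (s * (k - 1) + ℓ) * ((k * s + ℓ - 1).choose s : ℚ)

theorem raney_zero_left (k s : ℕ) : raney k 0 s = 0 := by
  simp [raney]

theorem raney_zero_right (k : ℕ) {ℓ : ℕ} (hℓ : ℓ ≠ 0) : raney k ℓ 0 = 1 := by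
  simp [raney, hℓ]

theorem raney_succ_succ {k : ℕ} (hk : 0 < k) (ℓ s : ℕ) :
    raney k (ℓ + 1) (s + 1) = raney k ℓ (s + 1) + raney k (ℓ + k) s := by
  obtain ⟨d, rfl⟩ : ∃ d, k = d + 1 := ⟨k - 1, by omega⟩
  set M := (d + 1) * s + ℓ + d
  have hM₁ : (d + 1) * (s + 1) + ℓ - 1 = M := by grind
  have hM₂ : (d + 1) * (s + 1) + (ℓ + 1) - 1 = M + 1 := by grind
  have hM₃ : (d + 1) * s + (ℓ + (d + 1)) - 1 = M := by grind
  have hA : (M.choose (s + 1) : ℚ) * (s + 1) = M.choose s * ((s + 1) * d + ℓ) := by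
    have := Nat.choose_succ_right_eq M s
    rw [show M - s = (s + 1) * d + ℓ by grind] at this
    exact_mod_cast this
  simp only [raney, hM₁, hM₂, hM₃, Nat.choose_succ_succ', Nat.cast_add, Nat.cast_one,
    add_sub_cancel_right]
  set A : ℚ := (M.choose (s + 1) : ℚ)
  set B : ℚ := (M.choose s : ℚ)
  rcases Nat.eq_zero_or_pos ℓ with rfl | hℓ
  · have hAB : A = B * d := by
      apply mul_right_cancel₀ (show (s : ℚ) + 1 ≠ 0 by positivity)
      linear_combination hA
    simp only [Nat.cast_zero, zero_div, zero_mul, zero_add, hAB]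
    field_simp
    ring
  · have hℓ' : (0 : ℚ) < ℓ := by exact_mod_cast hℓ
    field_simp
    linear_combination ((s + 1) * d + ℓ + 1) * d * hA

section FixedPoint

variable {R : Type*} [CommSemiring R] {T : R⟦X⟧}

theorem coeff_pow_of_lt (hT0 : constantCoeff T = 0) {j m : ℕ} (h : j < m) :
    coeff j (T ^ m) = 0 :=
  X_pow_dvd_iff.mp (pow_dvd_pow_of_dvd (X_dvd_iff.mpr hT0) m) j h

variable {k : ℕ} {c : R}

theorem coeff_succ_pow_succ_of_eq_X_add (hT : T = X + C c * T ^ k) (j m : ℕ) :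
    coeff (j + 1) (T ^ (m + 1)) = coeff j (T ^ m) + c * coeff (j + 1) (T ^ (m + k)) := by
  have : T ^ (m + 1) = X * T ^ m + C c * T ^ (m + k) := by
    rw [pow_succ', pow_add]
    nth_rewrite 1 [hT]
    ring
  rw [this, map_add, coeff_succ_X_mul, coeff_C_mul]

theorem coeff_pow_self_of_eq_X_add (hk : 2 ≤ k) (hT0 : constantCoeff T = 0)
    (hT : T = X + C c * T ^ k) (m : ℕ) : coeff m (T ^ m) = 1 := by
  induction m with
  | zero => simp
  | succ m ih =>
    rw [coeff_succ_pow_succ_of_eq_X_add hT, ih, coeff_pow_of_lt hT0 (by omega), mul_zero, add_zero]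

end FixedPoint

theorem coeff_pow_eq_raney {k : ℕ} (hk : 2 ≤ k) {c : ℚ} {T : ℚ⟦X⟧} (hT0 : constantCoeff T = 0)
    (hT : T = X + C c * T ^ k) (s ℓ : ℕ) (h : s + ℓ ≠ 0) :
    coeff (s * (k - 1) + ℓ) (T ^ ℓ) = raney k ℓ s * c ^ s := by
  induction s generalizing ℓ with
  | zero =>
    simp only [zero_mul, zero_add, pow_zero, mul_one] at h ⊢
    rw [coeff_pow_self_of_eq_X_add hk hT0 hT, raney_zero_right k h]
  | succ s ihs =>
    induction ℓ with
    | zero =>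
      rw [pow_zero, coeff_one, if_neg (by simp; omega), raney_zero_left, zero_mul]
    | succ ℓ ihℓ =>
      have hidx : (s + 1) * (k - 1) + ℓ + 1 = s * (k - 1) + (ℓ + k) := by grind
      rw [← add_assoc, coeff_succ_pow_succ_of_eq_X_add hT, ihℓ (by omega), hidx, ihs _ (by omega),
        raney_succ_succ (by omega)]
      ring

theorem phylo_coeff_pow_general (k : ℕ) (hk : 2 ≤ k) (T : PowerSeries ℚ)
    (hT0 : constantCoeff T = 0)
    (hT : T = X + C ((k.factorial : ℚ))⁻¹ * T ^ k)
    (ℓ n s : ℕ) (hn : 1 ≤ n)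
    (hns : n = s * (k - 1) + ℓ) :
    coeff n (T ^ ℓ) =
      ((ℓ : ℚ) / (s * (k - 1) + ℓ)) * ((k * s + ℓ - 1).choose s : ℚ) *
        ((k.factorial : ℚ))⁻¹ ^ s := by
  have hsℓ : s + ℓ ≠ 0 := by
    rintro h
    obtain ⟨rfl, rfl⟩ : s = 0 ∧ ℓ = 0 := by omega
    omega
  rw [hns, coeff_pow_eq_raney hk hT0 hT s ℓ hsℓ, raney]

/-- Let `k ≥ 2` and let `T` be the unique power series over `ℚ` with constant
coefficient `0` satisfying `T = X + T^k/k!`. For `ℓ ≥ 1`, `n ≥ 1` with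
`n - ℓ = s(k-1)` for a nonnegative integer `s`, the coefficient of `X^n` in `T^ℓ`
equals `(ℓ/(s(k-1)+ℓ)) · C(ks+ℓ-1, s) · (1/k!)^s`. -/
theorem phylo_coeff_pow (k : ℕ) (hk : 2 ≤ k) (T : PowerSeries ℚ)
    (hT0 : constantCoeff T = 0)
    (hT : T = X + C ((k.factorial : ℚ))⁻¹ * T ^ k)
    (ℓ n s : ℕ) (hℓ : 1 ≤ ℓ) (hn : 1 ≤ n)
    (hns : n = s * (k - 1) + ℓ) :
    coeff n (T ^ ℓ) =
      ((ℓ : ℚ) / (s * (k - 1) + ℓ)) * ((k * s + ℓ - 1).choose s : ℚ) *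
        ((k.factorial : ℚ))⁻¹ ^ s :=
  phylo_coeff_pow_general k hk T hT0 hT ℓ n s hn hns
end

section
/- Let k ≥ 2 be an integer and let T = T_k be the unique formal power series over ℚ with constant coefficient 0 satisfying T = X + T^k/k!. Then for all integers ℓ ≥ 1 and n ≥ 1, if k−1 does not divide n − ℓ, the coefficient of X^n in T^ℓ is 0. -/
/-!
Since `T` has no constant term, `T = X * U`, and the defining equation becomes
`U = 1 + X ^ (k - 1) * U ^ k / k!`. The power series in `X ^ (k - 1)` form a subsemiring, and
the coefficient of `X ^ m` on the right only involves coefficients of `U` below `m`, so strong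
induction shows that `U` is a power series in `X ^ (k - 1)`. Hence `T ^ ℓ = X ^ ℓ * U ^ ℓ` is
supported in degrees `≡ ℓ [MOD k - 1]`.
-/

open PowerSeries

namespace PowerSeries

variable {R : Type*} [CommSemiring R]

variable (R) in
/-- The power series in `X ^ d`. -/
def supportedOnMultiples (d : ℕ) : Subsemiring R⟦X⟧ where
  carrier := {F | ∀ n, ¬ d ∣ n → coeff n F = 0}
  one_mem' n hn := by
    rw [coeff_one, if_neg]
    rintro rfl
    exact hn (dvd_zero d)
  zero_mem' n _ := map_zero _
  add_mem' hF hG n hn := by rw [map_add, hF n hn, hG n hn, add_zero]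
  mul_mem' {F G} hF hG n hn := by
    refine (coeff_mul n F G).trans (Finset.sum_eq_zero fun ij hij => ?_)
    rw [Finset.HasAntidiagonal.mem_antidiagonal] at hij
    by_cases hi : d ∣ ij.1
    · have hj : ¬ d ∣ ij.2 := fun hj => hn (hij ▸ dvd_add hi hj)
      rw [hG _ hj, mul_zero]
    · rw [hF _ hi, zero_mul]

theorem coeff_pow_eq_coeff_trunc_pow (F : R⟦X⟧) (m k : ℕ) :
    coeff m (F ^ k) = coeff m ((trunc (m + 1) F : R⟦X⟧) ^ k) := by
  have coeff_eq_coeff_trunc (G : R⟦X⟧) : coeff m G = (trunc (m + 1) G).coeff m := by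
    rw [coeff_trunc, if_pos m.lt_succ_self]
  rw [coeff_eq_coeff_trunc, ← trunc_trunc_pow, ← coeff_eq_coeff_trunc]

theorem mem_supportedOnMultiples_of_eq_one_add {d k : ℕ} (hd : 1 ≤ d) (c : R) {U : R⟦X⟧}
    (hU : U = 1 + C c * X ^ d * U ^ k) : U ∈ supportedOnMultiples R d := by
  intro n
  induction n using Nat.strong_induction_on with
  | _ n ih =>
    intro hn
    have hn0 : n ≠ 0 := by rintro rfl; exact hn (dvd_zero d)
    rw [hU, map_add, coeff_one, if_neg hn0, zero_add, mul_assoc, coeff_C_mul,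
      coeff_X_pow_mul']
    split_ifs with hdn
    · -- `d ≥ 1` makes the truncation below see only coefficients of index `< n`.
      have htrunc : (trunc (n - d + 1) U : R⟦X⟧) ∈ supportedOnMultiples R d := by
        intro j hj
        rw [Polynomial.coeff_coe, coeff_trunc]
        split_ifs with hjn
        · exact ih j (by omega) hj
        · rfl
      rw [coeff_pow_eq_coeff_trunc_pow, pow_mem htrunc k _ ?_, mul_zero]
      exact (Nat.dvd_sub_iff_left hdn dvd_rfl).not.mpr hn
    · rw [mul_zero]

end PowerSeries

theorem phylo_coeff_pow_vanish_general (k : ℕ) (hk : 2 ≤ k) (T : PowerSeries ℚ)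
    (hT0 : constantCoeff T = 0)
    (hT : T = X + C ((k.factorial : ℚ))⁻¹ * T ^ k)
    (ℓ n : ℕ)
    (hndvd : ¬ ((k : ℤ) - 1 ∣ (n : ℤ) - (ℓ : ℤ))) :
    coeff n (T ^ ℓ) = 0 := by
  obtain ⟨U, rfl⟩ := X_dvd_iff.mpr hT0
  obtain ⟨d, rfl⟩ : ∃ d, k = d + 1 := ⟨k - 1, by omega⟩
  have hU : U = 1 + C ((d + 1).factorial : ℚ)⁻¹ * X ^ d * U ^ (d + 1) :=
    mul_left_cancel₀ X_ne_zero (by nth_rewrite 1 [hT]; ring)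
  have hUd : U ∈ supportedOnMultiples ℚ d :=
    mem_supportedOnMultiples_of_eq_one_add (by omega) _ hU
  rw [mul_pow, coeff_X_pow_mul']
  split_ifs with hℓn
  · refine pow_mem hUd ℓ _ fun ⟨m, hm⟩ => hndvd ⟨m, ?_⟩
    rw [← Nat.cast_sub hℓn, hm]
    push_cast
    ring
  · rfl

/-- Let `k ≥ 2` and let `T` be the unique power series over `ℚ` with constant
coefficient `0` satisfying `T = X + T^k/k!`. For `ℓ ≥ 1` and `n ≥ 1`, if `k-1`
does not divide `n - ℓ`, then the coefficient of `X^n` in `T^ℓ` is `0`. -/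
theorem phylo_coeff_pow_vanish (k : ℕ) (hk : 2 ≤ k) (T : PowerSeries ℚ)
    (hT0 : constantCoeff T = 0)
    (hT : T = X + C ((k.factorial : ℚ))⁻¹ * T ^ k)
    (ℓ n : ℕ) (hℓ : 1 ≤ ℓ) (hn : 1 ≤ n)
    (hndvd : ¬ ((k : ℤ) - 1 ∣ (n : ℤ) - (ℓ : ℤ))) :
    coeff n (T ^ ℓ) = 0 :=
  phylo_coeff_pow_vanish_general k hk T hT0 hT ℓ n hndvd
end

section
/- Let k ≥ 2 be an integer, let T = T_k be the unique formal power series over ℚ with constant coefficient 0 satisfying T = X + T^k/k!, let D = 1 − T^{k−1}/(k−1)! (a unit in ℚ[[X]] since its constant coefficient is 1), and let M_0 = T · D⁻¹. Then for every nonnegative integer s, setting n = s(k−1)+1, the coefficient of X^n in M_0 equals (ks+1) times the coefficient of X^n in T; moreover, if k−1 does not divide n−1 (with n ≥ 1), the coefficient of X^n in M_0 is 0. -/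
/-!
Differentiating `T = X + T^k/k!` gives `D · T' = 1`, so `M₀ = T · T'`, while eliminating `X`
from the same equation gives `T · D = k X - (k - 1) T`. Multiplying the latter by `T'` yields
`k X T' - (k - 1) M₀ = T`, i.e. `(k - 1) [Xⁿ] M₀ = (k n - 1) [Xⁿ] T`, and `k n - 1 = (k - 1)(k s + 1)`
for `n = s (k - 1) + 1`. The vanishing statement follows because every monomial of `T^k` built
from monomials `X^i` of `T` with `i ≡ 1 mod (k - 1)` has degree `≡ k ≡ 1`.
-/

open PowerSeries

namespace PowerSeries

variable {R : Type*}

section Semiring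

variable [Semiring R]

theorem coeff_mul_eq_zero_of_not_dvd {m r s : ℤ} {N : ℕ} {f g : R⟦X⟧}
    (hf₀ : constantCoeff f = 0) (hg₀ : constantCoeff g = 0)
    (hf : ∀ i < N, ¬ m ∣ (i : ℤ) - r → coeff i f = 0)
    (hg : ∀ i < N, ¬ m ∣ (i : ℤ) - s → coeff i g = 0) :
    ∀ n ≤ N, ¬ m ∣ (n : ℤ) - (r + s) → coeff n (f * g) = 0 := by
  intro n hn hnrs
  rw [coeff_mul]
  refine Finset.sum_eq_zero fun ⟨i, j⟩ hij => ?_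
  simp only [Finset.HasAntidiagonal.mem_antidiagonal] at hij
  obtain rfl | hi := Nat.eq_zero_or_pos i
  · simp [hf₀]
  obtain rfl | hj := Nat.eq_zero_or_pos j
  · simp [hg₀]
  by_cases hir : m ∣ (i : ℤ) - r
  · have hjs : ¬ m ∣ (j : ℤ) - s := fun hjs => hnrs <| by
      have hsplit : (n : ℤ) - (r + s) = ((i : ℤ) - r) + ((j : ℤ) - s) := by
        rw [← hij]; push_cast; ring
      exact hsplit ▸ dvd_add hir hjs
    rw [hg j (by omega) hjs, mul_zero]
  · rw [hf i (by omega) hir, zero_mul]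

theorem coeff_pow_succ_eq_zero_of_not_dvd {m r : ℤ} {N : ℕ} {f : R⟦X⟧}
    (hf₀ : constantCoeff f = 0) (hf : ∀ i < N, ¬ m ∣ (i : ℤ) - r → coeff i f = 0) (j : ℕ) :
    ∀ i < N, ¬ m ∣ (i : ℤ) - (j + 1) * r → coeff i (f ^ (j + 1)) = 0 := by
  induction j with
  | zero => simpa using hf
  | succ j ih =>
    intro i hi hir
    rw [pow_succ]
    refine coeff_mul_eq_zero_of_not_dvd (by simp [hf₀]) hf₀ ih hf i hi.le ?_
    convert hir using 2
    push_cast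
    ring

theorem coeff_eq_zero_of_eq_X_add_C_mul_pow {c : R} {k : ℕ} (hk : 2 ≤ k) {T : R⟦X⟧}
    (hT₀ : constantCoeff T = 0) (hT : T = X + C c * T ^ k) (n : ℕ)
    (hn : ¬ (k : ℤ) - 1 ∣ (n : ℤ) - 1) : coeff n T = 0 := by
  induction n using Nat.strong_induction_on with
  | _ n ih =>
  have hn₁ : n ≠ 1 := by rintro rfl; simp at hn
  obtain ⟨j, rfl⟩ : ∃ j, k = j + 2 := ⟨k - 2, by omega⟩
  have hTk : coeff n (T ^ (j + 1) * T) = 0 := by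
    refine coeff_mul_eq_zero_of_not_dvd (by simp [hT₀]) hT₀
      (coeff_pow_succ_eq_zero_of_not_dvd hT₀ ih j) ih n le_rfl fun h => hn ?_
    have hshift : (n : ℤ) - ((j + 1) * 1 + 1) = ((n : ℤ) - 1) - (((j + 2 : ℕ) : ℤ) - 1) := by
      push_cast; ring
    exact dvd_sub_self_right.mp (hshift ▸ h)
  rw [hT, map_add, coeff_C_mul, coeff_X, if_neg hn₁, pow_succ, hTk, mul_zero, add_zero]

end Semiring

theorem coeff_X_mul_derivative [CommSemiring R] (f : R⟦X⟧) (n : ℕ) :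
    coeff n (X * d⁄dX R f) = n * coeff n f := by
  cases n with
  | zero => simp
  | succ n => rw [coeff_succ_X_mul, coeff_derivative, mul_comm]; push_cast; rfl

section CommRing

variable [CommRing R] {c : R} {k : ℕ} {T : R⟦X⟧}

theorem one_sub_mul_derivative_eq_one (hT : T = X + C c * T ^ k) :
    (1 - C (k * c) * T ^ (k - 1)) * d⁄dX R T = 1 := by
  have hT' : d⁄dX R T = 1 + C (k * c) * T ^ (k - 1) * d⁄dX R T := by
    conv_lhs => rw [hT]
    simp only [map_add, derivative_X, Derivation.leibniz, Derivation.leibniz_pow, smul_eq_mul,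
      nsmul_eq_mul, derivative_C, mul_zero, add_zero, map_mul, map_natCast]
    ring
  linear_combination hT'

theorem mul_one_sub_eq_C_mul_X_sub (hT : T = X + C c * T ^ k) :
    T * (1 - C (k * c) * T ^ (k - 1)) = C (k : R) * X - C ((k : R) - 1) * T := by
  rcases k with _ | k
  · simp
  · simp only [map_mul, map_sub, map_one, map_natCast, add_tsub_cancel_right] at hT ⊢
    push_cast
    linear_combination (k + 1 : R⟦X⟧) * hT

theorem sub_one_mul_coeff_mul_derivative (hT : T = X + C c * T ^ k) (n : ℕ) :
    ((k : R) - 1) * coeff n (T * d⁄dX R T) = (k * n - 1) * coeff n T := by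
  have key : C (k : R) * (X * d⁄dX R T) - C ((k : R) - 1) * (T * d⁄dX R T) = T := by
    linear_combination (-d⁄dX R T) * mul_one_sub_eq_C_mul_X_sub hT +
      T * one_sub_mul_derivative_eq_one hT
  have hn := congrArg (coeff n) key
  rw [map_sub, coeff_C_mul, coeff_C_mul, coeff_X_mul_derivative] at hn
  linear_combination -hn

end CommRing

end PowerSeries

/-- Let `k ≥ 2`, let `T` be the unique power series over `ℚ` with constant coefficient `0`
satisfying `T = X + T^k/k!`, let `D = 1 - T^(k-1)/(k-1)!` and `M₀ = T · D⁻¹`.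
Then for every nonnegative `s`, with `n = s(k-1)+1`, the coefficient of `X^n` in `M₀`
is `(ks+1)` times that of `T`; moreover if `n ≥ 1` and `k-1` does not divide `n-1`,
the coefficient of `X^n` in `M₀` is `0`. -/
theorem phylo_vertex_gf_coeff (k : ℕ) (hk : 2 ≤ k) (T : PowerSeries ℚ)
    (hT0 : constantCoeff T = 0)
    (hT : T = X + C ((k.factorial : ℚ))⁻¹ * T ^ k)
    (D M₀ : PowerSeries ℚ)
    (hD : D = 1 - C (((k - 1).factorial : ℚ))⁻¹ * T ^ (k - 1))
    (hM : M₀ = T * D⁻¹) :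
    (∀ s n : ℕ, n = s * (k - 1) + 1 →
      coeff n M₀ = ((k : ℚ) * s + 1) * coeff n T) ∧
    (∀ n : ℕ, 1 ≤ n → ¬ ((k : ℤ) - 1 ∣ (n : ℤ) - 1) →
      coeff n M₀ = 0) := by
  have hc : (k : ℚ) * (k.factorial : ℚ)⁻¹ = ((k - 1).factorial : ℚ)⁻¹ := by
    rw [← Nat.mul_factorial_pred (by omega : k ≠ 0)]
    push_cast
    field_simp
  rw [← hc] at hD
  have hD₀ : constantCoeff D ≠ 0 := by simp [hD, hT0, zero_pow (by omega : k - 1 ≠ 0)]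
  have hDinv : D⁻¹ = d⁄dX ℚ T := (inv_eq_iff_mul_eq_one hD₀).mpr <| by
    rw [mul_comm, hD]
    exact one_sub_mul_derivative_eq_one hT
  have hcoeff (n : ℕ) : ((k : ℚ) - 1) * coeff n M₀ = (k * n - 1) * coeff n T := by
    rw [hM, hDinv]
    exact sub_one_mul_coeff_mul_derivative hT n
  have hk₁ : (k : ℚ) - 1 ≠ 0 := by
    have : (2 : ℚ) ≤ k := by exact_mod_cast hk
    linarith
  refine ⟨fun s n hn => mul_left_cancel₀ hk₁ ?_, fun n _ hn => ?_⟩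
  · rw [hcoeff, hn]
    push_cast [Nat.cast_sub (by omega : 1 ≤ k)]
    ring
  · have h := hcoeff n
    rw [coeff_eq_zero_of_eq_X_add_C_mul_pow hk hT0 hT n hn, mul_zero] at h
    exact (mul_eq_zero.mp h).resolve_left hk₁
end

section
/- Let k ≥ 2 be an integer, let T = T_k be the unique formal power series over ℚ with constant coefficient 0 satisfying T = X + T^k/k!, let D = 1 − T^{k−1}/(k−1)!, and let M_0 = T · D⁻¹. Then for every polynomial p ∈ ℚ[x], the ratio ([X^n] p(T)) / ([X^n] M_0) tends to 0 as n tends to infinity along integers n with n ≡ 1 (mod k−1), where p(T) denotes the evaluation of p at T in ℚ[[X]]. -/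
/-!
Write `m = k - 1`. Nonnegativity of the coefficients of `T`, and their vanishing outside degrees
`≡ 1 (mod m)`, are inherited from the Picard iterates `Tⱼ₊₁ = X + Tⱼ ^ k / k!`, which converge to
`T` `X`-adically. Differentiating the equation gives `T' = D⁻¹ = 1 + G T'` with
`G = T ^ m / m! ≥ 0`, so `G ^ r T' ≤ T'` coefficientwise, and `X ≤ T` gives
`[Xⁿ] T' ≤ [Xⁿ⁺¹] T T' = [Xⁿ⁺¹] M₀`. As `(n + 1) [Xⁿ⁺¹] Tⁱ = i [Xⁿ] Tⁱ⁻¹ T'`, for `i = m r + 1`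
this yields `[Xⁿ⁺¹] Tⁱ ≤ i (m!)ʳ [Xⁿ⁺¹] M₀ / (n + 1)`, while the other powers of `T` vanish in
degrees `≡ 1 (mod m)`. Summing over the monomials of `p` bounds the ratio by `O(1/n)`.
-/

open PowerSeries Finset

namespace PowerSeries

section Nonneg

variable {R : Type*} [CommSemiring R] [PartialOrder R] [IsOrderedRing R] {F G U : R⟦X⟧}

theorem coeff_mul_nonneg (hF : ∀ n, 0 ≤ coeff n F) (hG : ∀ n, 0 ≤ coeff n G) (n : ℕ) :
    0 ≤ coeff n (F * G) := by
  rw [coeff_mul]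
  exact sum_nonneg fun p _ => mul_nonneg (hF p.1) (hG p.2)

theorem coeff_pow_nonneg (hF : ∀ n, 0 ≤ coeff n F) (i n : ℕ) : 0 ≤ coeff n (F ^ i) := by
  induction i generalizing n with
  | zero => rw [pow_zero, coeff_one]; split_ifs <;> norm_num
  | succ i ih => rw [pow_succ]; exact coeff_mul_nonneg ih hF n

theorem coeff_mul_le_coeff_mul (hU : ∀ n, 0 ≤ coeff n U) (hFG : ∀ n, coeff n F ≤ coeff n G)
    (n : ℕ) : coeff n (U * F) ≤ coeff n (U * G) := by
  rw [coeff_mul, coeff_mul]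
  exact sum_le_sum fun p _ => mul_le_mul_of_nonneg_left (hFG p.2) (hU p.1)

theorem coeff_pow_mul_le_of_eq_one_add_mul (hG : ∀ n, 0 ≤ coeff n G)
    (hUG : U = 1 + G * U) (r n : ℕ) : coeff n (G ^ r * U) ≤ coeff n U := by
  have hGU : ∀ n, coeff n (G * U) ≤ coeff n U := fun n => by
    conv_rhs => rw [hUG]
    rw [map_add, coeff_one]
    refine le_add_of_nonneg_left ?_
    split_ifs <;> norm_num
  induction r generalizing n with
  | zero => rw [pow_zero, one_mul]
  | succ r ih =>
    rw [pow_succ', mul_assoc]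
    exact (coeff_mul_le_coeff_mul hG ih n).trans (hGU n)

theorem coeff_derivative_nonneg (hF : ∀ n, 0 ≤ coeff n F) (n : ℕ) :
    0 ≤ coeff n (d⁄dX R F) := by
  rw [coeff_derivative]
  exact mul_nonneg (hF _) (add_nonneg n.cast_nonneg zero_le_one)

theorem coeff_le_coeff_succ_mul (hXF : ∀ n, coeff n X ≤ coeff n F) (hU : ∀ n, 0 ≤ coeff n U)
    (n : ℕ) : coeff n U ≤ coeff (n + 1) (F * U) := by
  rw [← coeff_succ_X_mul, mul_comm F, mul_comm X]
  exact coeff_mul_le_coeff_mul hU hXF _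

end Nonneg

theorem coeff_succ_pow_mul_succ {R : Type*} [CommSemiring R] (F : R⟦X⟧) (i n : ℕ) :
    coeff (n + 1) (F ^ i) * (n + 1) = i * coeff n (F ^ (i - 1) * d⁄dX R F) := by
  rw [← coeff_derivative, Derivation.leibniz_pow, smul_eq_mul, nsmul_eq_mul, ← map_natCast C i,
    coeff_C_mul]

theorem abs_coeff_aeval_le {R : Type*} [CommRing R] [LinearOrder R] [IsStrictOrderedRing R]
    {F : R⟦X⟧} (p : Polynomial R) (n : ℕ) {K : ℕ → R} {b : R}
    (h : ∀ i, |coeff n (F ^ i)| ≤ K i * b) :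
    |coeff n (Polynomial.aeval F p)| ≤
      (∑ i ∈ range (p.natDegree + 1), |p.coeff i| * K i) * b := by
  rw [Polynomial.aeval_eq_sum_range, map_sum, sum_mul]
  refine (abs_sum_le_sum_abs _ _).trans (sum_le_sum fun i _ => ?_)
  rw [map_smul, smul_eq_mul, abs_mul, mul_assoc]
  exact mul_le_mul_of_nonneg_left (h i) (abs_nonneg _)

section SupportedMod

variable {R : Type*} [Semiring R] {m : ℕ} {a b : ZMod m} {F G : R⟦X⟧}

def SupportedMod (m : ℕ) (a : ZMod m) (F : R⟦X⟧) : Prop :=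
  ∀ n : ℕ, (n : ZMod m) ≠ a → coeff n F = 0

theorem SupportedMod.zero : SupportedMod m a (0 : R⟦X⟧) := fun _ _ => map_zero _

theorem SupportedMod.one : SupportedMod m 0 (1 : R⟦X⟧) := fun n hn => by
  rw [coeff_one, if_neg]
  rintro rfl
  exact hn Nat.cast_zero

theorem SupportedMod.X : SupportedMod m 1 (X : R⟦X⟧) := fun n hn => by
  rw [coeff_X, if_neg]
  rintro rfl
  exact hn Nat.cast_one

theorem SupportedMod.add (hF : SupportedMod m a F) (hG : SupportedMod m a G) :
    SupportedMod m a (F + G) := fun n hn => by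
  rw [map_add, hF n hn, hG n hn, add_zero]

theorem SupportedMod.C_mul (hF : SupportedMod m a F) (c : R) : SupportedMod m a (C c * F) :=
  fun n hn => by rw [coeff_C_mul, hF n hn, mul_zero]

theorem SupportedMod.mul (hF : SupportedMod m a F) (hG : SupportedMod m b G) :
    SupportedMod m (a + b) (F * G) := fun n hn => by
  rw [coeff_mul]
  refine sum_eq_zero fun p hp => ?_
  rw [← mem_antidiagonal.mp hp, Nat.cast_add] at hn
  by_cases hp1 : (p.1 : ZMod m) = a
  · rw [hG p.2 fun hp2 => hn (by rw [hp1, hp2]), mul_zero]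
  · rw [hF p.1 hp1, zero_mul]

theorem SupportedMod.pow (hF : SupportedMod m a F) (i : ℕ) :
    SupportedMod m (i • a) (F ^ i) := by
  induction i with
  | zero => rw [pow_zero, zero_smul]; exact .one
  | succ i ih => rw [pow_succ, succ_nsmul]; exact ih.mul hF

end SupportedMod

section PicardIterate

variable {R : Type*}

noncomputable def picardIterate [Semiring R] (c : R) (k : ℕ) : ℕ → R⟦X⟧
  | 0 => 0
  | j + 1 => X + C c * picardIterate c k j ^ k

theorem X_dvd_picardIterate [CommSemiring R] (c : R) {k : ℕ} (hk : k ≠ 0) (j : ℕ) :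
    X ∣ picardIterate c k j := by
  cases j with
  | zero => exact dvd_zero _
  | succ j =>
    refine dvd_add dvd_rfl (dvd_mul_of_dvd_right (dvd_pow ?_ hk) _)
    exact X_dvd_picardIterate c hk j

theorem X_pow_dvd_sub_picardIterate [CommRing R] {c : R} {k : ℕ} {T : R⟦X⟧} (hk : 2 ≤ k)
    (hT0 : constantCoeff T = 0) (hT : T = X + C c * T ^ k) (j : ℕ) :
    X ^ j ∣ T - picardIterate c k j := by
  induction j with
  | zero => exact pow_zero (X : R⟦X⟧) ▸ one_dvd _
  | succ j ih =>
    set P := picardIterate c k j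
    have hXT : X ∣ T := X_dvd_iff.mpr hT0
    have hXP : X ∣ P := X_dvd_picardIterate c (by omega) j
    -- `T ^ k - P ^ k` is `T - P` times a sum of monomials of degree `k - 1 ≥ 1` in `T` and `P`
    have hXsum : X ∣ ∑ i ∈ range k, T ^ i * P ^ (k - 1 - i) := by
      refine dvd_sum fun i _ => ?_
      rcases Nat.eq_zero_or_pos i with rfl | hi0
      · exact dvd_mul_of_dvd_right (dvd_pow hXP (by omega)) _
      · exact dvd_mul_of_dvd_left (dvd_pow hXT hi0.ne') _
    have hsub : T - picardIterate c k (j + 1) =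
        C c * ((∑ i ∈ range k, T ^ i * P ^ (k - 1 - i)) * (T - P)) := by
      rw [geom_sum₂_mul, picardIterate]
      nth_rw 1 [hT]
      ring
    rw [hsub, pow_succ']
    exact dvd_mul_of_dvd_right (mul_dvd_mul hXsum ih) _

theorem coeff_eq_coeff_picardIterate [CommRing R] {c : R} {k : ℕ} {T : R⟦X⟧} (hk : 2 ≤ k)
    (hT0 : constantCoeff T = 0) (hT : T = X + C c * T ^ k) (n : ℕ) :
    coeff n T = coeff n (picardIterate c k (n + 1)) :=
  sub_eq_zero.mp <| by
    rw [← map_sub]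
    exact X_pow_dvd_iff.mp (X_pow_dvd_sub_picardIterate hk hT0 hT (n + 1)) n n.lt_succ_self

theorem coeff_picardIterate_nonneg [CommSemiring R] [PartialOrder R] [IsOrderedRing R] {c : R}
    (hc : 0 ≤ c) (k j n : ℕ) : 0 ≤ coeff n (picardIterate c k j) := by
  induction j generalizing n with
  | zero => simp [picardIterate]
  | succ j ih =>
    rw [picardIterate, map_add, coeff_C_mul]
    refine add_nonneg ?_ (mul_nonneg hc (coeff_pow_nonneg ih k n))
    rw [coeff_X]
    split_ifs <;> norm_num

theorem supportedMod_picardIterate [Semiring R] (c : R) {k : ℕ} (hk : 1 ≤ k) (j : ℕ) :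
    SupportedMod (k - 1) 1 (picardIterate c k j) := by
  induction j with
  | zero => exact .zero
  | succ j ih =>
    have hk1 : k • (1 : ZMod (k - 1)) = 1 := by
      rw [nsmul_one, ← Nat.sub_add_cancel hk, Nat.cast_add, ZMod.natCast_self, zero_add,
        Nat.add_sub_cancel, Nat.cast_one]
    exact SupportedMod.X.add (hk1 ▸ ih.pow k |>.C_mul c)

end PicardIterate

section FixedPoint

variable {R : Type*} {c : R} {k : ℕ} {T : R⟦X⟧}

theorem coeff_nonneg_of_eq_X_add_C_mul_pow [CommRing R] [PartialOrder R] [IsOrderedRing R]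
    (hc : 0 ≤ c) (hk : 2 ≤ k) (hT0 : constantCoeff T = 0) (hT : T = X + C c * T ^ k) (n : ℕ) :
    0 ≤ coeff n T := by
  rw [coeff_eq_coeff_picardIterate hk hT0 hT]
  exact coeff_picardIterate_nonneg hc k _ n

theorem coeff_X_le_of_eq_X_add_C_mul_pow [CommRing R] [PartialOrder R] [IsOrderedRing R]
    (hc : 0 ≤ c) (hk : 2 ≤ k) (hT0 : constantCoeff T = 0) (hT : T = X + C c * T ^ k) (n : ℕ) :
    coeff n X ≤ coeff n T := by
  conv_rhs => rw [hT]
  rw [map_add, coeff_C_mul]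
  exact le_add_of_nonneg_right
    (mul_nonneg hc (coeff_pow_nonneg (coeff_nonneg_of_eq_X_add_C_mul_pow hc hk hT0 hT) k n))

theorem supportedMod_of_eq_X_add_C_mul_pow [CommRing R] (hk : 2 ≤ k)
    (hT0 : constantCoeff T = 0) (hT : T = X + C c * T ^ k) : SupportedMod (k - 1) 1 T :=
  fun n hn => by
    rw [coeff_eq_coeff_picardIterate hk hT0 hT]
    exact supportedMod_picardIterate c (by omega) _ n hn

theorem derivative_eq_one_add_of_eq_X_add_C_mul_pow [CommSemiring R]
    (hT : T = X + C c * T ^ k) :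
    d⁄dX R T = 1 + C (c * k) * T ^ (k - 1) * d⁄dX R T := by
  conv_lhs => rw [hT]
  rw [map_add, derivative_X, ← smul_eq_C_mul, Derivation.map_smul, Derivation.leibniz_pow,
    smul_eq_C_mul, smul_eq_mul, nsmul_eq_mul, ← map_natCast C k, map_mul]
  ring

theorem derivative_eq_inv_of_eq_X_add_C_mul_pow [Field R] (hk : 2 ≤ k)
    (hT0 : constantCoeff T = 0) (hT : T = X + C c * T ^ k) :
    d⁄dX R T = (1 - C (c * k) * T ^ (k - 1))⁻¹ := by
  rw [eq_inv_iff_mul_eq_one]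
  · linear_combination derivative_eq_one_add_of_eq_X_add_C_mul_pow hT
  · simp [hT0, zero_pow (show k - 1 ≠ 0 by omega)]

theorem pow_mul_coeff_pow_mul_le [CommRing R] [PartialOrder R] [IsOrderedRing R]
    (hc : 0 ≤ c) (hk : 2 ≤ k) (hT0 : constantCoeff T = 0) (hT : T = X + C c * T ^ k)
    (r n : ℕ) :
    (c * k) ^ r * (coeff (n + 1) (T ^ ((k - 1) * r + 1)) * (n + 1)) ≤
      ((k - 1) * r + 1 : ℕ) * coeff (n + 1) (T * d⁄dX R T) := by
  have hTnn := coeff_nonneg_of_eq_X_add_C_mul_pow hc hk hT0 hT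
  have hGnn : ∀ n, 0 ≤ coeff n (C (c * k) * T ^ (k - 1)) := fun n => by
    rw [coeff_C_mul]
    exact mul_nonneg (mul_nonneg hc k.cast_nonneg) (coeff_pow_nonneg hTnn _ n)
  have hGT' : (c * k) ^ r * coeff n (T ^ ((k - 1) * r) * d⁄dX R T) ≤ coeff n (d⁄dX R T) := by
    have := coeff_pow_mul_le_of_eq_one_add_mul hGnn
      (derivative_eq_one_add_of_eq_X_add_C_mul_pow hT) r n
    rwa [mul_pow, ← map_pow, ← pow_mul, mul_assoc, coeff_C_mul] at this
  have hT'M := coeff_le_coeff_succ_mul (coeff_X_le_of_eq_X_add_C_mul_pow hc hk hT0 hT)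
    (coeff_derivative_nonneg hTnn) n
  rw [coeff_succ_pow_mul_succ, Nat.add_sub_cancel, mul_left_comm]
  exact mul_le_mul_of_nonneg_left (hGT'.trans hT'M) (Nat.cast_nonneg _)

theorem abs_coeff_pow_le [Field R] [LinearOrder R] [IsStrictOrderedRing R]
    (hc : 0 < c) (hk : 2 ≤ k) (hT0 : constantCoeff T = 0) (hT : T = X + C c * T ^ k)
    (i s : ℕ) :
    |coeff (s * (k - 1) + 1) (T ^ i)| ≤ i / (c * k) ^ ((i - 1) / (k - 1)) *
      (coeff (s * (k - 1) + 1) (T * d⁄dX R T) / ((s * (k - 1) : ℕ) + 1)) := by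
  have hTnn := coeff_nonneg_of_eq_X_add_C_mul_pow hc.le hk hT0 hT
  have hck : 0 < c * k := mul_pos hc (by exact_mod_cast (by omega : 0 < k))
  have hM : 0 ≤ coeff (s * (k - 1) + 1) (T * d⁄dX R T) :=
    coeff_mul_nonneg hTnn (coeff_derivative_nonneg hTnn) _
  rw [abs_of_nonneg (coeff_pow_nonneg hTnn i _)]
  rcases i with _ | j
  · simp [coeff_one]
  by_cases hdvd : k - 1 ∣ j
  · obtain ⟨r, rfl⟩ := hdvd
    have := pow_mul_coeff_pow_mul_le hc.le hk hT0 hT r (s * (k - 1))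
    rw [Nat.add_sub_cancel, Nat.mul_div_cancel_left r (by omega), ← mul_div_assoc,
      div_mul_eq_mul_div, le_div_iff₀ (by positivity), le_div_iff₀ (by positivity)]
    linarith
  · have hres : ((s * (k - 1) + 1 : ℕ) : ZMod (k - 1)) ≠ (j + 1) • 1 := by
      rw [nsmul_one, Nat.cast_add, Nat.cast_mul, ZMod.natCast_self, mul_zero, zero_add]
      simpa [ZMod.natCast_eq_zero_iff] using hdvd
    rw [(supportedMod_of_eq_X_add_C_mul_pow hk hT0 hT).pow (j + 1) _ hres]
    positivity

theorem exists_abs_coeff_aeval_div_le [Field R] [LinearOrder R] [IsStrictOrderedRing R]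
    (hc : 0 < c) (hk : 2 ≤ k) (hT0 : constantCoeff T = 0) (hT : T = X + C c * T ^ k)
    (p : Polynomial R) :
    ∃ B, ∀ s : ℕ, |coeff (s * (k - 1) + 1) (Polynomial.aeval T p) /
      coeff (s * (k - 1) + 1) (T * d⁄dX R T)| ≤ B / ((s * (k - 1) : ℕ) + 1) := by
  set K : ℕ → R := fun i => i / (c * k) ^ ((i - 1) / (k - 1))
  have hK : ∀ i, 0 ≤ K i := fun i => div_nonneg i.cast_nonneg (pow_nonneg (by positivity) _)
  refine ⟨∑ i ∈ range (p.natDegree + 1), |p.coeff i| * K i, fun s => ?_⟩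
  have hN : (0 : R) < (s * (k - 1) : ℕ) + 1 := by positivity
  have hB := abs_coeff_aeval_le p _ (abs_coeff_pow_le hc hk hT0 hT · s)
  have hTnn := coeff_nonneg_of_eq_X_add_C_mul_pow hc.le hk hT0 hT
  rcases (coeff_mul_nonneg hTnn (coeff_derivative_nonneg hTnn) (s * (k - 1) + 1)).eq_or_lt
    with hM | hM
  · rw [← hM, div_zero, abs_zero]
    exact div_nonneg (sum_nonneg fun i _ => mul_nonneg (abs_nonneg _) (hK i)) hN.le
  · rw [abs_div, abs_of_pos hM, div_le_iff₀ hM]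
    exact hB.trans_eq (by ring)

end FixedPoint

end PowerSeries

/-- Let `k ≥ 2`, let `T` be the unique power series over `ℚ` with constant coefficient `0`
satisfying `T = X + T^k/k!`, let `D = 1 - T^(k-1)/(k-1)!` and `M₀ = T · D⁻¹`.
Then for every polynomial `p ∈ ℚ[x]`, the ratio `([X^n] p(T)) / ([X^n] M₀)` tends to `0`
as `n → ∞` along integers `n ≡ 1 (mod k-1)`, i.e. along `n = s(k-1)+1` as `s → ∞`. -/
theorem phylo_polynomial_negligible (k : ℕ) (hk : 2 ≤ k) (T : PowerSeries ℚ)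
    (hT0 : constantCoeff T = 0)
    (hT : T = X + C ((k.factorial : ℚ))⁻¹ * T ^ k)
    (D M₀ : PowerSeries ℚ)
    (hD : D = 1 - C (((k - 1).factorial : ℚ))⁻¹ * T ^ (k - 1))
    (hM : M₀ = T * D⁻¹)
    (p : Polynomial ℚ) :
    Filter.Tendsto
      (fun s : ℕ =>
        ((coeff (s * (k - 1) + 1) (Polynomial.aeval T p) : ℚ) : ℝ) /
          ((coeff (s * (k - 1) + 1) M₀ : ℚ) : ℝ))
      Filter.atTop (nhds 0) := by
  have hc : (0 : ℚ) < (k.factorial : ℚ)⁻¹ := by positivity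
  have hck : (k.factorial : ℚ)⁻¹ * k = ((k - 1).factorial : ℚ)⁻¹ := by
    rw [← Nat.mul_factorial_pred (by omega : k ≠ 0), Nat.cast_mul]
    field_simp
  have hDinv : D⁻¹ = d⁄dX ℚ T := by
    rw [hD, ← hck, derivative_eq_inv_of_eq_X_add_C_mul_pow hk hT0 hT]
  obtain ⟨B, hB⟩ := exists_abs_coeff_aeval_div_le hc hk hT0 hT p
  have hN : Filter.Tendsto (fun s : ℕ => s * (k - 1) + 1) Filter.atTop Filter.atTop :=
    Filter.tendsto_atTop_mono (fun s => Nat.le_succ_of_le (Nat.le_mul_of_pos_right s (by omega)))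
      Filter.tendsto_id
  refine squeeze_zero_norm (fun s => ?_) ((tendsto_const_div_atTop_nhds_zero_nat (B : ℝ)).comp hN)
  rw [hM, hDinv, ← Rat.cast_div, Real.norm_eq_abs, ← Rat.cast_abs, Function.comp_apply]
  exact_mod_cast hB s
end

section
/- Let k ≥ 2 be an integer, let T = T_k be the unique formal power series over ℚ with constant coefficient 0 satisfying T = X + T^k/k!, and let D = 1 − T^{k−1}/(k−1)!. Then for every integer i ≥ 0 there exists a polynomial p ∈ ℚ[x] such that T^{k^i} · D⁻¹ = p(T) + (k−1)!^{c_i} · T · D⁻¹ in ℚ[[X]], where c_i = (k^i − 1)/(k − 1). -/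
open PowerSeries

/-! Writing `D = 1 - T^(k-1)/(k-1)!` as `T^(k-1) = (k-1)! (1 - D)` gives
`T^(j+k-1) D⁻¹ = (k-1)! T^j D⁻¹ - (k-1)! T^j`: raising the exponent by `k - 1` multiplies the
`D⁻¹`-part by `(k-1)!` at the cost of a polynomial in `T`. Since `k^i = 1 + cᵢ (k-1)`, doing this
`cᵢ` times starting from `T D⁻¹` gives the claim. -/

theorem pow_eq_one_add_div_mul_sub_one {k : ℕ} (hk : 0 < k) (i : ℕ) :
    k ^ i = 1 + (k ^ i - 1) / (k - 1) * (k - 1) := by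
  have hdvd : k - 1 ∣ k ^ i - 1 := by simpa using Nat.sub_dvd_pow_sub_pow k 1 i
  rw [Nat.div_mul_cancel hdvd]
  have := Nat.one_le_pow i k hk
  omega

theorem pow_add_mul_mul_sub_mem_adjoin_singleton {R A : Type*} [CommRing R] [CommRing A]
    [Algebra R A] {t d e : A} {c : R} {n : ℕ} (hde : d * e = 1)
    (ht : t ^ n = algebraMap R A c * (1 - d)) (j m : ℕ) :
    t ^ (j + m * n) * e - algebraMap R A (c ^ m) * (t ^ j * e) ∈ Algebra.adjoin R {t} := by
  induction m with
  | zero => simp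
  | succ m ih =>
    set a := algebraMap R A c
    set u := t ^ (j + m * n)
    have step : t ^ (j + (m + 1) * n) * e - algebraMap R A (c ^ (m + 1)) * (t ^ j * e) =
        a * (u * e - algebraMap R A (c ^ m) * (t ^ j * e)) - a * u := by
      rw [show j + (m + 1) * n = j + m * n + n by ring, pow_add, map_pow, map_pow]
      linear_combination (u * e) * ht - (a * u) * hde
    rw [step]
    have hu : u ∈ Algebra.adjoin R {t} := pow_mem (Algebra.self_mem_adjoin_singleton R t) _
    exact sub_mem (Subalgebra.mul_mem _ (Subalgebra.algebraMap_mem _ c) ih)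
      (Subalgebra.mul_mem _ (Subalgebra.algebraMap_mem _ c) hu)

theorem phylo_split_off_polynomial_general (k : ℕ) (hk : 2 ≤ k) (T : PowerSeries ℚ)
    (hT0 : constantCoeff T = 0)
    (D : PowerSeries ℚ)
    (hD : D = 1 - C (((k - 1).factorial : ℚ))⁻¹ * T ^ (k - 1))
    (i : ℕ) :
    ∃ p : Polynomial ℚ,
      T ^ (k ^ i) * D⁻¹ =
        Polynomial.aeval T p +
          C ((((k - 1).factorial : ℚ)) ^ ((k ^ i - 1) / (k - 1))) * T * D⁻¹ := by
  have hDinv : D * D⁻¹ = 1 := PowerSeries.mul_inv_cancel _ <| by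
    simp [hD, hT0, zero_pow (by omega : k - 1 ≠ 0)]
  have hTD : T ^ (k - 1) = C ((k - 1).factorial : ℚ) * (1 - D) := by
    have hfac : ((k - 1).factorial : ℚ) ≠ 0 := by positivity
    rw [hD, sub_sub_cancel, ← mul_assoc, ← map_mul, mul_inv_cancel₀ hfac, map_one, one_mul]
  have hmem := pow_add_mul_mul_sub_mem_adjoin_singleton hDinv hTD 1 ((k ^ i - 1) / (k - 1))
  rw [Algebra.adjoin_singleton_eq_range_aeval, ← pow_eq_one_add_div_mul_sub_one (by omega)] at hmem
  obtain ⟨p, hp⟩ := hmem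
  refine ⟨p, ?_⟩
  rw [AlgHom.toRingHom_eq_coe, RingHom.coe_coe] at hp
  rw [hp, pow_one, algebraMap_eq]
  ring

/-- Let `k ≥ 2`, let `T` be the unique power series over `ℚ` with constant coefficient `0`
satisfying `T = X + T^k/k!`, and `D = 1 - T^(k-1)/(k-1)!`. Then for every `i ≥ 0` there
is a polynomial `p ∈ ℚ[x]` with `T^(k^i) · D⁻¹ = p(T) + (k-1)!^(cᵢ) · T · D⁻¹`,
where `cᵢ = (k^i - 1)/(k - 1)`. -/
theorem phylo_split_off_polynomial (k : ℕ) (hk : 2 ≤ k) (T : PowerSeries ℚ)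
    (hT0 : constantCoeff T = 0)
    (hT : T = X + C ((k.factorial : ℚ))⁻¹ * T ^ k)
    (D : PowerSeries ℚ)
    (hD : D = 1 - C (((k - 1).factorial : ℚ))⁻¹ * T ^ (k - 1))
    (i : ℕ) :
    ∃ p : Polynomial ℚ,
      T ^ (k ^ i) * D⁻¹ =
        Polynomial.aeval T p +
          C ((((k - 1).factorial : ℚ)) ^ ((k ^ i - 1) / (k - 1))) * T * D⁻¹ :=
  phylo_split_off_polynomial_general k hk T hT0 D hD i
end

section
/- Let k ≥ 2 be an integer, let T = T_k be the unique formal power series over ℚ with constant coefficient 0 satisfying T = X + T^k/k!, let D = 1 − T^{k−1}/(k−1)!, and for each integer i ≥ 0 let M_i = (1/k!^{c_i}) · T^{k^i} · D⁻¹, where c_i = (k^i − 1)/(k − 1). Then for every fixed integer i ≥ 1, the ratio ([X^n] M_i) / ([X^n] M_0) tends to 1/k^{c_i} = 1/k^{(k^i − 1)/(k−1)} as n tends to infinity along integers n with n ≡ 1 (mod k−1). -/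
/-!
The series `G = D⁻¹` satisfies `G = 1 + (k/k!) T^(k-1) G`, and together with
`T^(m+1) = X T^m + T^(m+k)/k!` this gives a Pascal-type recursion for the coefficients of
`T^m G`: one finds `[X^(m + j(k-1))] T^m G = C(m + jk, j)/k!^j` (Lagrange inversion in
disguise, as `G = T'`). Since `k^i = cᵢ(k-1) + 1`, at `n = s(k-1) + 1` the ratio of
coefficients becomes `C(N - cᵢ, s - cᵢ)/C(N, s) = s^(cᵢ)/N^(cᵢ)` (falling factorials) with
`N = sk + 1`, and this tends to `k^(-cᵢ)`.
-/

open PowerSeries Filter Topology Asymptotics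

section CoeffFormula

variable {R : Type*} [CommRing R]

lemma PowerSeries.coeff_pow_mul_of_lt {T : R⟦X⟧} (hT0 : constantCoeff T = 0) (F : R⟦X⟧)
    {m n : ℕ} (hnm : n < m) : coeff n (T ^ m * F) = 0 := by
  have hdvd : X ^ m ∣ T ^ m * F :=
    (pow_dvd_pow_of_dvd (X_dvd_iff.mpr hT0) m).mul_right F
  exact X_pow_dvd_iff.mp hdvd n hnm

theorem coeff_pow_mul_eq_choose_mul_pow {k : ℕ} {a : R} {T G : R⟦X⟧} (hk : 2 ≤ k)
    (hT0 : constantCoeff T = 0) (hT : T = X + C a * T ^ k)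
    (hG : G = 1 + C (k * a) * T ^ (k - 1) * G) (j m : ℕ) :
    coeff (m + j * (k - 1)) (T ^ m * G) = (m + j * k).choose j * a ^ j := by
  obtain ⟨d, rfl⟩ : ∃ d, k = d + 1 := ⟨k - 1, by omega⟩
  rw [Nat.add_sub_cancel] at hG ⊢
  have hX : ∀ m n : ℕ, coeff (n + 1) (T ^ (m + 1) * G) =
      coeff n (T ^ m * G) + a * coeff (n + 1) (T ^ (m + d + 1) * G) := by
    intro m n
    have hmul : T ^ (m + 1) * G = X * (T ^ m * G) + C a * (T ^ (m + d + 1) * G) := by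
      calc T ^ (m + 1) * G = T ^ m * (X + C a * T ^ (d + 1)) * G := by rw [← hT, pow_succ]
        _ = _ := by ring
    rw [hmul, map_add, coeff_succ_X_mul, coeff_C_mul]
  have hG' : ∀ n : ℕ,
      coeff n G = (if n = 0 then 1 else 0) + (d + 1) * a * coeff n (T ^ d * G) := by
    intro n
    conv_lhs => rw [hG]
    push_cast
    rw [map_add, coeff_one, mul_assoc, coeff_C_mul]
  induction j generalizing m with
  | zero =>
    induction m with
    | zero =>
      simp [hG' 0, coeff_pow_mul_of_lt hT0 G (show 0 < d by omega)]
    | succ m ih =>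
      simp only [zero_mul, add_zero, Nat.choose_zero_right, pow_zero] at ih ⊢
      rw [hX, ih, coeff_pow_mul_of_lt hT0 G (by omega : m + 1 < m + d + 1)]
      simp
  | succ j ihj =>
    induction m with
    | zero =>
      have hchoose :
          (d + 1) * (d + j * (d + 1)).choose j = ((j + 1) * (d + 1)).choose (j + 1) := by
        apply Nat.eq_of_mul_eq_mul_right (by omega : 0 < j + 1)
        have := Nat.add_one_mul_choose_eq (d + j * (d + 1)) j
        rw [show d + j * (d + 1) + 1 = (j + 1) * (d + 1) by ring] at this
        rw [← this]
        ring
      have hidx : (j + 1) * d = d + j * d := by ring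
      simp only [zero_add, pow_zero, one_mul]
      rw [hidx, hG', if_neg (by omega), ihj, ← hchoose]
      push_cast
      ring
    | succ m ihm =>
      have hidx : m + 1 + (j + 1) * d = (m + (j + 1) * d) + 1 := by ring
      have hidx' : m + (j + 1) * d + 1 = (m + d + 1) + j * d := by ring
      rw [hidx, hX, ihm, hidx', ihj, show m + d + 1 + j * (d + 1) = m + (j + 1) * (d + 1) by ring,
        show m + 1 + (j + 1) * (d + 1) = (m + (j + 1) * (d + 1)) + 1 by ring, Nat.choose_succ_succ']
      push_cast
      ring

theorem coeff_pow_mul_eq_choose_sub_mul_pow {k : ℕ} {a : R} {T G : R⟦X⟧} (hk : 2 ≤ k)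
    (hT0 : constantCoeff T = 0) (hT : T = X + C a * T ^ k)
    (hG : G = 1 + C (k * a) * T ^ (k - 1) * G) {c s : ℕ} (hcs : c ≤ s) :
    coeff (s * (k - 1) + 1) (T ^ (c * (k - 1) + 1) * G) =
      (s * k + 1 - c).choose (s - c) * a ^ (s - c) := by
  obtain ⟨j, rfl⟩ := Nat.exists_eq_add_of_le hcs
  obtain ⟨d, rfl⟩ : ∃ d, k = d + 1 := ⟨k - 1, by omega⟩
  have hidx : (c + j) * (d + 1 - 1) + 1 = (c * (d + 1 - 1) + 1) + j * (d + 1 - 1) := by ring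
  have hidx' : (c + j) * (d + 1) + 1 - c = (c * (d + 1 - 1) + 1) + j * (d + 1) := by
    rw [Nat.add_sub_cancel]
    have : (c + j) * (d + 1) + 1 = c + (c * d + 1 + j * (d + 1)) := by ring
    omega
  rw [hidx, coeff_pow_mul_eq_choose_mul_pow hk hT0 hT hG, hidx', Nat.add_sub_cancel_left]

end CoeffFormula

lemma PowerSeries.inv_one_sub_eq_one_add_mul_inv {K : Type*} [Field K] {ψ : K⟦X⟧}
    (hψ : constantCoeff ψ = 0) : (1 - ψ)⁻¹ = 1 + ψ * (1 - ψ)⁻¹ := by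
  have hinv : (1 - ψ) * (1 - ψ)⁻¹ = 1 := PowerSeries.mul_inv_cancel _ (by simp [hψ])
  linear_combination hinv

theorem Nat.cast_choose_sub_div_cast_choose {c s n : ℕ} (hcs : c ≤ s) (hsn : s ≤ n) :
    ((n - c).choose (s - c) : ℝ) / n.choose s = s.descFactorial c / n.descFactorial c := by
  have hnat : (n - c).choose (s - c) * n.descFactorial c = s.descFactorial c * n.choose s := by
    rw [Nat.descFactorial_eq_factorial_mul_choose, Nat.descFactorial_eq_factorial_mul_choose,
      mul_assoc, mul_comm (s.choose c), Nat.choose_mul hcs]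
    ring
  have hchoose : (n.choose s : ℝ) ≠ 0 := by exact_mod_cast (Nat.choose_pos hsn).ne'
  have hdesc : (n.descFactorial c : ℝ) ≠ 0 := by
    exact_mod_cast (Nat.descFactorial_pos.mpr (hcs.trans hsn)).ne'
  rw [div_eq_div_iff hchoose hdesc]
  exact_mod_cast hnat

theorem tendsto_descFactorial_div_descFactorial_mul_add {k : ℕ} (hk : 0 < k) (b c : ℕ) :
    Tendsto (fun s : ℕ => (s.descFactorial c : ℝ) / (s * k + b).descFactorial c) atTop
      (𝓝 ((k : ℝ) ^ c)⁻¹) := by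
  have hlin : Tendsto (fun s : ℕ => s * k + b) atTop atTop :=
    tendsto_atTop_mono (fun s => Nat.le_add_right_of_le (Nat.le_mul_of_pos_right s hk)) tendsto_id
  have hequiv :=
    (isEquivalent_descFactorial c).div ((isEquivalent_descFactorial c).comp_tendsto hlin)
  refine hequiv.symm.tendsto_nhds ?_
  simp only [Pi.div_def, Function.comp_def]
  have hratio : Tendsto (fun s : ℕ => (s : ℝ) / (s * k + b : ℕ)) atTop (𝓝 (k : ℝ)⁻¹) := by
    have hk' : (k : ℝ) ≠ 0 := by positivity
    have := (tendsto_natCast_div_add_atTop ((b : ℝ) / k)).const_mul (k : ℝ)⁻¹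
    rw [mul_one] at this
    refine this.congr fun s => ?_
    push_cast
    field_simp
  simpa only [inv_pow, div_pow] using hratio.pow c

theorem Nat.pow_eq_div_mul_add_one {k : ℕ} (hk : 0 < k) (i : ℕ) :
    k ^ i = (k ^ i - 1) / (k - 1) * (k - 1) + 1 := by
  rw [Nat.div_mul_cancel (Nat.sub_one_dvd_pow_sub_one k i),
    Nat.sub_add_cancel (Nat.one_le_pow i k hk)]

theorem phylo_rank_at_least_prob_general (k : ℕ) (hk : 2 ≤ k) (T : PowerSeries ℚ)
    (hT0 : constantCoeff T = 0)
    (hT : T = X + C ((k.factorial : ℚ))⁻¹ * T ^ k)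
    (D : PowerSeries ℚ)
    (hD : D = 1 - C (((k - 1).factorial : ℚ))⁻¹ * T ^ (k - 1))
    (M : ℕ → PowerSeries ℚ)
    (hM : ∀ i : ℕ,
      M i = C (((k.factorial : ℚ) ^ ((k ^ i - 1) / (k - 1)))⁻¹) * T ^ (k ^ i) * D⁻¹)
    (i : ℕ) :
    Filter.Tendsto
      (fun s : ℕ =>
        ((coeff (s * (k - 1) + 1) (M i) : ℚ) : ℝ) /
          ((coeff (s * (k - 1) + 1) (M 0) : ℚ) : ℝ))
      Filter.atTop (nhds (((k : ℝ) ^ ((k ^ i - 1) / (k - 1)))⁻¹)) := by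
  set a : ℚ := (k.factorial : ℚ)⁻¹ with ha
  have hG : D⁻¹ = 1 + C (k * a) * T ^ (k - 1) * D⁻¹ := by
    have hka : (k : ℚ) * a = ((k - 1).factorial : ℚ)⁻¹ := by
      rw [ha, ← Nat.mul_factorial_pred (by omega : k ≠ 0)]
      push_cast
      field_simp
    rw [hka, hD]
    exact inv_one_sub_eq_one_add_mul_inv (by simp [hT0, zero_pow (by omega : k - 1 ≠ 0)])
  have hcoeff : ∀ i s, (k ^ i - 1) / (k - 1) ≤ s →
      coeff (s * (k - 1) + 1) (M i) =
        (s * k + 1 - (k ^ i - 1) / (k - 1)).choose (s - (k ^ i - 1) / (k - 1)) * a ^ s := by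
    intro i s hs
    rw [hM]
    set c := (k ^ i - 1) / (k - 1)
    have hc : k ^ i = c * (k - 1) + 1 := Nat.pow_eq_div_mul_add_one (by omega) i
    rw [mul_assoc, ← inv_pow, coeff_C_mul, hc,
      coeff_pow_mul_eq_choose_sub_mul_pow hk hT0 hT hG hs, mul_left_comm, ← pow_add,
      Nat.add_sub_cancel' hs]
  refine (tendsto_descFactorial_div_descFactorial_mul_add (by omega : 0 < k) 1 _).congr' ?_
  filter_upwards [eventually_ge_atTop ((k ^ i - 1) / (k - 1))] with s hs
  have ha_pos : (0 : ℝ) < (a : ℝ) ^ s := by positivity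
  rw [hcoeff i s hs, hcoeff 0 s (by simp), pow_zero, Nat.sub_self, Nat.zero_div, Nat.sub_zero,
    Nat.sub_zero]
  push_cast
  rw [mul_div_mul_right _ _ ha_pos.ne', Nat.cast_choose_sub_div_cast_choose hs (by nlinarith)]

/-- Let `k ≥ 2`, `T` the unique power series over `ℚ` with constant coefficient `0`
satisfying `T = X + T^k/k!`, `D = 1 - T^(k-1)/(k-1)!`, and
`Mᵢ = (1/k!^(cᵢ)) · T^(k^i) · D⁻¹` with `cᵢ = (k^i-1)/(k-1)`. Then for every fixed
`i ≥ 1`, the ratio `([X^n] Mᵢ)/([X^n] M₀)` tends to `1/k^(cᵢ)` as `n → ∞` along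
integers `n ≡ 1 (mod k-1)`, i.e. along `n = s(k-1)+1` as `s → ∞`. -/
theorem phylo_rank_at_least_prob (k : ℕ) (hk : 2 ≤ k) (T : PowerSeries ℚ)
    (hT0 : constantCoeff T = 0)
    (hT : T = X + C ((k.factorial : ℚ))⁻¹ * T ^ k)
    (D : PowerSeries ℚ)
    (hD : D = 1 - C (((k - 1).factorial : ℚ))⁻¹ * T ^ (k - 1))
    (M : ℕ → PowerSeries ℚ)
    (hM : ∀ i : ℕ,
      M i = C (((k.factorial : ℚ) ^ ((k ^ i - 1) / (k - 1)))⁻¹) * T ^ (k ^ i) * D⁻¹)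
    (i : ℕ) (hi : 1 ≤ i) :
    Filter.Tendsto
      (fun s : ℕ =>
        ((coeff (s * (k - 1) + 1) (M i) : ℚ) : ℝ) /
          ((coeff (s * (k - 1) + 1) (M 0) : ℚ) : ℝ))
      Filter.atTop (nhds (((k : ℝ) ^ ((k ^ i - 1) / (k - 1)))⁻¹)) :=
  phylo_rank_at_least_prob_general k hk T hT0 hT D hD M hM i
end
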